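/- Soundness of ADL with respect to the WFS: Let D = ⟨R, C, ∅⟩ be a defeasible theory such that R_u = ∅ and C[p] is finite for each p ∈ Lit(D), and let Π be the logic program translation of D. Then for every p ∈ Lit(D): (1) if D ⊨_ADL p then Π ⊨_WFS p, and (2) if D ⊣_ADL p then Π ⊣_WFS p. -/

import Mathlib

namespace DLWFS

universe u

/-- Ground literals over a type `A` of atoms: atoms and their classical complements. -/
inductive Lit (A : Type u) : Type u where
  | pos : A → Lit A
  | neg : A → Lit A

/-- The classical complement `p̄` of a literal `p`. -/
def Lit.compl {A : Type u} : Lit A → Lit A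
  | .pos a => .neg a
  | .neg a => .pos a

/-- The three kinds of rules of a defeasible theory. -/
inductive RuleKind : Type where
  | strict
  | defeasible
  | defeater
deriving DecidableEq

/-- A rule of a defeasible theory: a kind, a body (a set of literals) and a head literal. -/
structure DRule (A : Type u) where
  kind : RuleKind
  body : Set (Lit A)
  head : Lit A

/-- A defeasible theory `D = ⟨R, C, ≺⟩`. -/
structure DTheory (A : Type u) where
  rules : Set (DRule A)
  conflicts : Set (Set (Lit A))
  prec : DRule A → DRule A → Prop

namespace DTheory

variable {A : Type u}

/-- The strict rules `R_s`. -/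
def Rs (D : DTheory A) : Set (DRule A) := {r ∈ D.rules | r.kind = RuleKind.strict}

/-- The defeasible rules `R_d`. -/
def Rd (D : DTheory A) : Set (DRule A) := {r ∈ D.rules | r.kind = RuleKind.defeasible}

/-- The defeater rules `R_u`. -/
def Ru (D : DTheory A) : Set (DRule A) := {r ∈ D.rules | r.kind = RuleKind.defeater}

/-- `C[p]`: the conflict sets containing literal `p`. -/
def Cset (D : DTheory A) (p : Lit A) : Set (Set (Lit A)) := {c ∈ D.conflicts | p ∈ c}

/-- Structural conditions in the definition of a defeasible theory: a countable set of
rules with finite bodies, a countable set of finite conflict sets containing every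
minimal conflict set `{p, ¬p}`, and an acyclic priority relation over non-strict rules. -/
def WellFormed (D : DTheory A) : Prop :=
  D.rules.Countable ∧ D.conflicts.Countable ∧
  (∀ r ∈ D.rules, r.body.Finite) ∧
  (∀ c ∈ D.conflicts, c.Finite) ∧
  (∀ p : A, ({Lit.pos p, Lit.neg p} : Set (Lit A)) ∈ D.conflicts) ∧
  (∀ r s, D.prec r s → r.kind ≠ RuleKind.strict ∧ s.kind ≠ RuleKind.strict) ∧
  (∀ r, ¬ Relation.TransGen D.prec r r)

/-- `C = C_MIN`: the conflict sets are exactly the minimal ones `{p, ¬p}`. -/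
def MinimalConflicts (D : DTheory A) : Prop :=
  D.conflicts = {c | ∃ p : A, c = ({Lit.pos p, Lit.neg p} : Set (Lit A))}

end DTheory

/-- A 3-valued interpretation: a pair `⟨T, F⟩` of sets. -/
abbrev Interp (L : Type u) : Type u := Set L × Set L

variable {A : Type u}

/-- `S` is ADL-unfounded with respect to theory `D` and interpretation `I = ⟨T, F⟩`. -/
def ADLUnfounded (D : DTheory A) (I : Interp (Lit A)) (S : Set (Lit A)) : Prop :=
  ∀ p ∈ S,
    (∀ r ∈ D.Rs, r.head = p → (r.body ∩ (I.2 ∪ S)).Nonempty) ∧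
    (∀ r ∈ D.Rd, r.head = p →
      (r.body ∩ (I.2 ∪ S)).Nonempty ∨
      ∃ c ∈ D.conflicts, p ∈ c ∧
        ∀ q ∈ c \ {p}, ∃ s ∈ D.rules, s.head = q ∧ s.body ⊆ I.1 ∧
          (D.prec r s ∨ s.kind = RuleKind.strict))

/-- `S` is NDL-unfounded with respect to theory `D` and interpretation `I = ⟨T, F⟩`. -/
def NDLUnfounded (D : DTheory A) (I : Interp (Lit A)) (S : Set (Lit A)) : Prop :=
  ∀ p ∈ S,
    (∀ r ∈ D.Rs, r.head = p → (r.body ∩ (I.2 ∪ S)).Nonempty) ∧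
    (∀ r ∈ D.Rd, r.head = p →
      (r.body ∩ (I.2 ∪ S)).Nonempty ∨
      ∃ c ∈ D.conflicts, p ∈ c ∧
        ∀ q ∈ c \ {p}, ∃ s ∈ D.rules, s.head = q ∧ s.body ⊆ I.1 ∧
          ¬ D.prec s r)

/-- `U_D(I)` for ADL: the union of all ADL-unfounded sets. -/
def UA (D : DTheory A) (I : Interp (Lit A)) : Set (Lit A) :=
  ⋃₀ {S | ADLUnfounded D I S}

/-- `U_D(I)` for NDL: the union of all NDL-unfounded sets. -/
def UN (D : DTheory A) (I : Interp (Lit A)) : Set (Lit A) :=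
  ⋃₀ {S | NDLUnfounded D I S}

/-- `T_D(I)`: the literals having a witness of provability with respect to `I = ⟨T, F⟩`. -/
def TD (D : DTheory A) (I : Interp (Lit A)) : Set (Lit A) :=
  {p | ∃ r ∈ D.rules, r.head = p ∧ r.body ⊆ I.1 ∧
    (r.kind = RuleKind.strict ∨
      (r.kind = RuleKind.defeasible ∧
        ∀ c ∈ D.conflicts, p ∈ c →
          ∃ q ∈ c \ {p}, ∀ s ∈ D.rules, s.head = q →
            (D.prec s r ∨ (s.body ∩ I.2).Nonempty)))}

/-- `W_D` for ADL. -/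
def WA (D : DTheory A) (I : Interp (Lit A)) : Interp (Lit A) := (TD D I, UA D I)

/-- `W_D` for NDL. -/
def WN (D : DTheory A) (I : Interp (Lit A)) : Interp (Lit A) := (TD D I, UN D I)

/-- `I` is the well-founded model for the operator `W`: the least fixpoint of `W`
(componentwise order). -/
def IsWFModel {L : Type u} (W : Interp L → Interp L) (I : Interp L) : Prop :=
  W I = I ∧ ∀ J, W J = J → I.1 ⊆ J.1 ∧ I.2 ⊆ J.2

/-- A rule of a normal logic program: `head ← pos, ∼neg`. -/
structure NRule (A : Type u) where
  head : A
  pos : Set A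
  neg : Set A

/-- A normal logic program: a set of rules. -/
abbrev NProgram (A : Type u) : Type u := Set (NRule A)

/-- Structural conditions in the definition of a normal logic program: a countable
set of ground rules with finite bodies. -/
def NProgram.WellFormed (P : NProgram A) : Prop :=
  P.Countable ∧ ∀ r ∈ P, r.pos.Finite ∧ r.neg.Finite

/-- The immediate consequence operator `T_Π` on 3-valued interpretations. -/
def TP (P : NProgram A) (I : Interp A) : Set A :=
  {a | ∃ r ∈ P, r.head = a ∧ r.pos ⊆ I.1 ∧ r.neg ⊆ I.2}

/-- `S` is an unfounded set of program `P` with respect to interpretation `I = ⟨T, F⟩`. -/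
def PUnfounded (P : NProgram A) (I : Interp A) (S : Set A) : Prop :=
  ∀ p ∈ S, ∀ r ∈ P, r.head = p →
    (r.pos ∩ (I.2 ∪ S)).Nonempty ∨ (r.neg ∩ I.1).Nonempty

/-- `U_Π(I)`: the greatest unfounded set (union of all unfounded sets). -/
def UP (P : NProgram A) (I : Interp A) : Set A :=
  ⋃₀ {S | PUnfounded P I S}

/-- `W_Π(I) = ⟨T_Π(I), U_Π(I)⟩`. -/
def WP (P : NProgram A) (I : Interp A) : Interp A := (TP P I, UP P I)

/-- Transfinite iteration of an operator `W` from `⊥`, taking suprema at limit ordinals. -/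
noncomputable def iterW {α : Type*} [CompleteLattice α] (W : α → α) : Ordinal.{0} → α :=
  fun o =>
    Ordinal.limitRecOn (motive := fun _ => α) o ⊥ (fun _ ih => W ih)
      (fun o' _ ih => ⨆ x : Set.Iio o', ih x.1 x.2)

/-- One step of the immediate consequence operator for a set of defeasible-theory rules. -/
def TRstep (R : Set (DRule A)) (S : Set (Lit A)) : Set (Lit A) :=
  {p | ∃ r ∈ R, r.head = p ∧ r.body ⊆ S}

/-- The finite iterates `T_R ↑ n`. -/
def TRiter (R : Set (DRule A)) : ℕ → Set (Lit A)
  | 0 => ∅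
  | n + 1 => TRstep R (TRiter R n)

/-- `Cl(R) = T_R ↑ ω`. -/
def ClR (R : Set (DRule A)) : Set (Lit A) := ⋃ n, TRiter R n

/-- The `α`-reduct `D_α^S` of a defeasible theory. -/
def alphaReduct (D : DTheory A) (S : Set (Lit A)) : Set (DRule A) :=
  D.Rs ∪ {r ∈ D.Rd | ∀ c ∈ D.conflicts, r.head ∈ c → ∃ q ∈ c \ {r.head}, q ∉ S}

/-- The ambiguity-propagating operator `α_D(S) = Cl(D_α^S)`. -/
def alphaOp (D : DTheory A) (S : Set (Lit A)) : Set (Lit A) := ClR (alphaReduct D S)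

/-- The `β`-reduct `D_β^S` of a defeasible theory. -/
def betaReduct (D : DTheory A) (S : Set (Lit A)) : Set (DRule A) :=
  D.Rs ∪ {r ∈ D.Rd | ∀ c ∈ D.conflicts, r.head ∈ c →
    ∃ q ∈ c \ {r.head}, ∀ s ∈ D.rules, s.head = q → (¬ s.body ⊆ S ∨ D.prec s r)}

/-- The ambiguity-blocking operator `β_D(S) = Cl(D_β^S)`. -/
def betaOp (D : DTheory A) (S : Set (Lit A)) : Set (Lit A) := ClR (betaReduct D S)

/-- `S` is an `α`-stable set of `D`. -/
def AlphaStable (D : DTheory A) (S : Set (Lit A)) : Prop := alphaOp D S = S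

/-- `S` is a `β`-stable set of `D`. -/
def BetaStable (D : DTheory A) (S : Set (Lit A)) : Prop := betaOp D S = S

/-- The sequence `X_D↑λ`: `X↑0 = ∅`, `X↑(λ+1) = β_D(β_D(X↑λ))`, unions at limits. -/
noncomputable def Xseq (D : DTheory A) : Ordinal.{0} → Set (Lit A) :=
  iterW (fun S => betaOp D (betaOp D S))

/-- The Gelfond–Lifschitz reduct `Π^S`. -/
def glReduct (P : NProgram A) (S : Set A) : NProgram A :=
  {r' | ∃ r ∈ P, r.neg ∩ S = ∅ ∧ r' = NRule.mk r.head r.pos ∅}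

/-- One step of the immediate consequence operator for a NAF-free program. -/
def TPstep (P : NProgram A) (S : Set A) : Set A :=
  {a | ∃ r ∈ P, r.head = a ∧ r.pos ⊆ S}

/-- The finite iterates `T_Π ↑ n` of a NAF-free program. -/
def TPiter (P : NProgram A) : ℕ → Set A
  | 0 => ∅
  | n + 1 => TPstep P (TPiter P n)

/-- `Cl(Π) = T_Π ↑ ω`. -/
def ClP (P : NProgram A) : Set A := ⋃ n, TPiter P n

/-- The Gelfond–Lifschitz operator `γ_Π(S) = Cl(Π^S)`. -/
def gamma (P : NProgram A) (S : Set A) : Set A := ClP (glReduct P S)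

/-- `S` is a stable model of `P`. -/
def StableModel (P : NProgram A) (S : Set A) : Prop := gamma P S = S

/-- `Prod(C[p])`: all sets obtained by choosing one literal other than `p` from each
conflict set containing `p`. -/
def ProdC (D : DTheory A) (p : Lit A) : Set (Set (Lit A)) :=
  {Q | ∃ f : Set (Lit A) → Lit A,
    (∀ c ∈ D.conflicts, p ∈ c → f c ∈ c \ {p}) ∧
    Q = f '' {c ∈ D.conflicts | p ∈ c}}

/-- The logic program translation `Π_D` of a defeasible theory `D` (negative literals
are treated as fresh atoms, so the atoms of the program are the literals of `D`). -/
def lpTrans (D : DTheory A) : NProgram (Lit A) :=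
  {r' | ∃ r ∈ D.Rs, r' = NRule.mk r.head r.body ∅} ∪
  {r' | ∃ r ∈ D.Rd, ∃ Q ∈ ProdC D r.head, r' = NRule.mk r.head r.body Q}

/-- The explicit version `Φ` of a normal program `Π`: atoms of `Φ` are the literals
over the atoms of `Π` (`¬p` being a fresh atom). -/
def explicitVer (P : NProgram A) : NProgram (Lit A) :=
  {r' | ∃ r ∈ P, r' = NRule.mk (Lit.pos r.head) (Lit.pos '' r.pos ∪ Lit.neg '' r.neg) ∅} ∪
  {r' | ∃ p : A, r' = NRule.mk (Lit.neg p) ∅ {Lit.pos p}}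

/-- The minimal conflict sets over atom type `A`. -/
def CMin (A : Type u) : Set (Set (Lit A)) :=
  {c | ∃ p : A, c = ({Lit.pos p, Lit.neg p} : Set (Lit A))}

/-- The defeasible theory translation `D_Π` of a normal program `Π`: each program rule
becomes a strict rule (default literals `∼b` becoming negative literals `¬b`), and each
atom `p` yields a presumption `∅ ⇒ ¬p`; conflict sets are minimal and `≺` is empty. -/
def dtTrans (P : NProgram A) : DTheory A :=
  { rules :=
      {e | ∃ r ∈ P, e = DRule.mk RuleKind.strict
            (Lit.pos '' r.pos ∪ Lit.neg '' r.neg) (Lit.pos r.head)} ∪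
      {e | ∃ p : A, e = DRule.mk RuleKind.defeasible ∅ (Lit.neg p)}
    conflicts := CMin A
    prec := fun _ _ => False }

/-- `M^¬ = M ∪ {¬p : p ∉ M}`, atoms being identified with positive literals. -/
def negCompl (M : Set A) : Set (Lit A) :=
  Lit.pos '' M ∪ Lit.neg '' {p | p ∉ M}

end DLWFS

namespace DLWFS

/-!
Every `I` with `W_Π(I) ≤ I` for `Π = Π_D` also satisfies `W_D(I) ≤ I`; as `W_D` is monotone, its
least fixpoint then lies below the well-founded model of `Π_D`. A witness of provability `r` for
`p` selects in each conflict set of `C[p]` a literal all of whose rules have a false body: such a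
literal is an unfounded singleton of `Π_D`, and the selection is a member of `Prod(C[p])` making
the negative body of a translation of `r` false. Conversely, with `≺` empty, a literal defeating
a defeasible rule in an ADL-unfounded set heads a strict rule with true body, hence is true, and
it refutes the negative body of every translation of that rule.
-/

section Soundness

variable {A : Type*}

theorem IsWFModel.le_of_map_le {L : Type*} {W : Interp L → Interp L} (hW : Monotone W)
    {I J : Interp L} (hI : IsWFModel W I) (hJ : W J ≤ J) : I ≤ J := by
  let W' : Interp L →o Interp L := ⟨W, hW⟩
  have hI_le : I ≤ OrderHom.lfp W' := Prod.le_def.mpr (hI.2 _ W'.map_lfp)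
  exact hI_le.trans (OrderHom.lfp_le W' hJ)

section Monotonicity

variable (D : DTheory A) {I J : Interp (Lit A)}

theorem TD_mono (hIJ : I ≤ J) : TD D I ⊆ TD D J := by
  obtain ⟨hT, hF⟩ := hIJ
  rintro p ⟨r, hr, rfl, hbody, hkind⟩
  refine ⟨r, hr, rfl, hbody.trans hT, hkind.imp_right fun ⟨hdef, hc⟩ => ⟨hdef, ?_⟩⟩
  intro c hc_mem hpc
  obtain ⟨q, hq, hblocked⟩ := hc c hc_mem hpc
  exact ⟨q, hq, fun s hs hsq =>
    (hblocked s hs hsq).imp_right fun h => h.mono (Set.inter_subset_inter_right _ hF)⟩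

theorem ADLUnfounded.mono {S : Set (Lit A)} (hS : ADLUnfounded D I S) (hIJ : I ≤ J) :
    ADLUnfounded D J S := by
  obtain ⟨hT, hF⟩ := hIJ
  have hF_S : I.2 ∪ S ⊆ J.2 ∪ S := Set.union_subset_union_left S hF
  intro p hp
  obtain ⟨hstrict, hdef⟩ := hS p hp
  refine ⟨fun r hr hrp => (hstrict r hr hrp).mono (Set.inter_subset_inter_right _ hF_S),
    fun r hr hrp => ?_⟩
  refine (hdef r hr hrp).imp (fun h => h.mono (Set.inter_subset_inter_right _ hF_S)) ?_
  rintro ⟨c, hc, hpc, hdefeated⟩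
  refine ⟨c, hc, hpc, fun q hq => ?_⟩
  obtain ⟨s, hs, hsq, hbody, hprec⟩ := hdefeated q hq
  exact ⟨s, hs, hsq, hbody.trans hT, hprec⟩

theorem UA_mono (hIJ : I ≤ J) : UA D I ⊆ UA D J :=
  Set.sUnion_mono fun _ hS => ADLUnfounded.mono D hS hIJ

theorem WA_mono : Monotone (WA D) := fun _ _ hIJ =>
  Prod.le_def.mpr ⟨TD_mono D hIJ, UA_mono D hIJ⟩

end Monotonicity

section Translation

variable {D : DTheory A}

theorem exists_mem_ProdC {p : Lit A} {P : Lit A → Prop}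
    (h : ∀ c ∈ D.conflicts, p ∈ c → ∃ q ∈ c \ {p}, P q) :
    ∃ Q ∈ ProdC D p, ∀ q ∈ Q, P q := by
  classical
  have : Nonempty (Lit A) := ⟨p⟩
  choose! f hf_mem hf_P using h
  refine ⟨f '' {c | c ∈ D.conflicts ∧ p ∈ c}, ⟨f, hf_mem, rfl⟩, ?_⟩
  rintro _ ⟨c, ⟨hc, hpc⟩, rfl⟩
  exact hf_P c hc hpc

theorem exists_rule_of_mem_lpTrans {r' : NRule (Lit A)} (hr' : r' ∈ lpTrans D) :
    ∃ r ∈ D.rules, r.head = r'.head ∧ r.body = r'.pos := by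
  rcases hr' with ⟨r, hr, rfl⟩ | ⟨r, hr, _, _, rfl⟩
  exacts [⟨r, hr.1, rfl, rfl⟩, ⟨r, hr.1, rfl, rfl⟩]

theorem mem_TP_lpTrans_of_strict {I : Interp (Lit A)} {r : DRule A} (hr : r ∈ D.rules)
    (hstrict : r.kind = RuleKind.strict) (hbody : r.body ⊆ I.1) :
    r.head ∈ TP (lpTrans D) I :=
  ⟨⟨r.head, r.body, ∅⟩, Or.inl ⟨r, ⟨hr, hstrict⟩, rfl⟩, rfl, hbody, Set.empty_subset _⟩

theorem mem_UP_lpTrans {I : Interp (Lit A)} {q : Lit A}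
    (hq : ∀ s ∈ D.rules, s.head = q → (s.body ∩ I.2).Nonempty) :
    q ∈ UP (lpTrans D) I := by
  refine ⟨{q}, fun x hx r' hr' hr'x => Or.inl ?_, rfl⟩
  obtain ⟨s, hs, hsx, hs_body⟩ := exists_rule_of_mem_lpTrans hr'
  rw [← hs_body]
  exact (hq s hs (hsx.trans (hr'x.trans hx))).mono
    (Set.inter_subset_inter_right _ Set.subset_union_left)

variable (hprec : ∀ r s, ¬ D.prec r s)
include hprec

theorem TD_subset_TP_lpTrans {I : Interp (Lit A)} (hU : UP (lpTrans D) I ⊆ I.2) :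
    TD D I ⊆ TP (lpTrans D) I := by
  rintro p ⟨r, hr, rfl, hbody, hstrict | ⟨hdef, hc⟩⟩
  · exact mem_TP_lpTrans_of_strict hr hstrict hbody
  · have hc' : ∀ c ∈ D.conflicts, r.head ∈ c → ∃ q ∈ c \ {r.head},
        ∀ s ∈ D.rules, s.head = q → (s.body ∩ I.2).Nonempty := fun c hc_mem hpc =>
      (hc c hc_mem hpc).imp fun _ ⟨hq, hblocked⟩ =>
        ⟨hq, fun s hs hsq => (hblocked s hs hsq).resolve_left (hprec s r)⟩
    obtain ⟨Q, hQ, hQ_false⟩ := exists_mem_ProdC hc'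
    exact ⟨⟨r.head, r.body, Q⟩, Or.inr ⟨r, ⟨hr, hdef⟩, Q, hQ, rfl⟩, rfl, hbody,
      fun q hq => hU (mem_UP_lpTrans (hQ_false q hq))⟩

theorem ADLUnfounded.pUnfounded_lpTrans {I : Interp (Lit A)} {S : Set (Lit A)}
    (hT : TP (lpTrans D) I ⊆ I.1) (hS : ADLUnfounded D I S) :
    PUnfounded (lpTrans D) I S := by
  intro p hp r' hr' hr'p
  obtain ⟨hstrict, hdef⟩ := hS p hp
  rcases hr' with ⟨r, hr, rfl⟩ | ⟨r, hr, Q, ⟨f, hf, rfl⟩, rfl⟩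
  · exact Or.inl (hstrict r hr hr'p)
  · refine (hdef r hr hr'p).imp id fun ⟨c, hc, hpc, hdefeated⟩ => ?_
    subst hr'p
    obtain ⟨s, hs, hsc, hbody, hs_kind⟩ := hdefeated (f c) (hf c hc hpc)
    have hs_strict : s.kind = RuleKind.strict := hs_kind.resolve_left (hprec r s)
    exact ⟨f c, ⟨c, ⟨hc, hpc⟩, rfl⟩, hT (hsc ▸ mem_TP_lpTrans_of_strict hs hs_strict hbody)⟩

theorem WA_le_of_WP_lpTrans_le {I : Interp (Lit A)} (hI : WP (lpTrans D) I ≤ I) :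
    WA D I ≤ I := by
  obtain ⟨hT, hU⟩ := Prod.le_def.mp hI
  refine Prod.le_def.mpr ⟨(TD_subset_TP_lpTrans hprec hU).trans hT, ?_⟩
  exact (Set.sUnion_mono fun _ hS => ADLUnfounded.pUnfounded_lpTrans hprec hT hS).trans hU

end Translation

end Soundness

theorem adl_sound_wrt_wfs_general {A : Type*} (D : DTheory A)
    (hprec : ∀ r s, ¬ D.prec r s)
    (ID : Interp (Lit A)) (hID : IsWFModel (WA D) ID)
    (IP : Interp (Lit A)) (hIP : IsWFModel (WP (lpTrans D)) IP) :
    ∀ p : Lit A, (p ∈ ID.1 → p ∈ IP.1) ∧ (p ∈ ID.2 → p ∈ IP.2) := by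
  have hIP_pre : WA D IP ≤ IP := WA_le_of_WP_lpTrans_le hprec hIP.1.le
  obtain ⟨hT, hF⟩ := Prod.le_def.mp (hID.le_of_map_le (WA_mono D) hIP_pre)
  exact fun p => ⟨@hT p, @hF p⟩

/-- **Soundness of ADL wrt the WFS.** Let `D = ⟨R, C, ∅⟩` be a defeasible theory with
`R_u = ∅` and `C[p]` finite for each literal `p`, and let `Π` be its logic program
translation. For every literal `p`: if `D ⊨_ADL p` then `Π ⊨_WFS p`, and if
`D ⊣_ADL p` then `Π ⊣_WFS p`. -/
theorem adl_sound_wrt_wfs {A : Type*} (D : DTheory A)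
    (hwf : D.WellFormed)
    (hru : D.Ru = ∅)
    (hprec : ∀ r s, ¬ D.prec r s)
    (hfin : ∀ p : Lit A, (D.Cset p).Finite)
    (ID : Interp (Lit A)) (hID : IsWFModel (WA D) ID)
    (IP : Interp (Lit A)) (hIP : IsWFModel (WP (lpTrans D)) IP) :
    ∀ p : Lit A, (p ∈ ID.1 → p ∈ IP.1) ∧ (p ∈ ID.2 → p ∈ IP.2) :=
  adl_sound_wrt_wfs_general D hprec ID hID IP hIP

end DLWFS
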